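/- arXiv:2107.12171 — 4 statements merged into one kernel-verified Lean document; each statement's English description precedes it below -/
import Mathlib

section
/- In a free product A ∗ B of two nontrivial groups, every element of finite order is conjugate to a letter, i.e., to an element of A or of B. -/
/-!
A reduced word whose first and last letters lie in different factors has infinite order: its
powers are the concatenations of copies of the word, which are again nonempty reduced words.
If the first and last letters `x` and `y` lie in the same factor, conjugating by `x` turns the
word into the middle part followed by the single letter `y * x`; either `y * x = 1` and the word
got shorter, or the new word starts and ends in different factors. Induction on the length of
the reduced word leaves only words with at most one letter.
-/

namespace Monoid.CoprodI

variable {ι : Type*}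

section Monoid

variable {M : ι → Type*} [∀ i, Monoid (M i)]

def Word.ofInfix (w : Word M) {l : List (Σ i, M i)} (h : l <:+: w.toList) : Word M where
  toList := l
  ne_one a ha := w.ne_one a (h.subset ha)
  chain_ne := w.chain_ne.infix h

namespace NeWord

variable {i j : ι}

def pow (w : NeWord M i j) (hji : j ≠ i) : ℕ → NeWord M i j
  | 0 => w
  | n + 1 => append w hji (w.pow hji n)

theorem prod_pow (w : NeWord M i j) (hji : j ≠ i) (n : ℕ) :
    (w.pow hji n).prod = w.prod ^ (n + 1) := by
  induction n with
  | zero => simp [pow]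
  | succ n ih => rw [pow, append_prod, ih, pow_succ' _ (n + 1)]

end NeWord

variable [DecidableEq ι] [∀ i, DecidableEq (M i)]

theorem Word.prod_ne_one {w : Word M} (hw : w.toList ≠ []) : w.prod ≠ 1 := fun h =>
  hw (congrArg Word.toList (Word.equiv.symm.injective h : w = Word.empty))

theorem NeWord.prod_ne_one {i j : ι} (w : NeWord M i j) : w.prod ≠ 1 :=
  Word.prod_ne_one (w := w.toWord) w.toList_ne_nil

theorem NeWord.not_isOfFinOrder_prod {i j : ι} (w : NeWord M i j) (hij : i ≠ j) :
    ¬ IsOfFinOrder w.prod := by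
  rw [isOfFinOrder_iff_pow_eq_one]
  rintro ⟨_ | n, hn, h⟩
  · exact hn.false
  · exact (w.pow hij.symm n).prod_ne_one (by rwa [NeWord.prod_pow])

theorem Word.not_isOfFinOrder_prod {w : Word M} {a b : Σ i, M i} {m : List (Σ i, M i)}
    (hw : w.toList = a :: (m ++ [b])) (hab : a.1 ≠ b.1) : ¬ IsOfFinOrder w.prod := by
  obtain ⟨i, j, w', rfl⟩ := NeWord.of_word w (by rintro rfl; simp at hw)
  have ha := w'.toList_head?
  have hb := w'.toList_getLast?
  change w'.toList = _ at hw
  rw [hw, ← List.cons_append] at ha hb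
  simp only [List.head?_append, List.head?_cons, Option.some_or, Option.some.injEq,
    List.getLast?_concat] at ha hb
  subst ha hb
  exact w'.not_isOfFinOrder_prod hab

theorem Word.not_isOfFinOrder_prod_mul_of {w : Word M} {c : Σ i, M i} {m : List (Σ i, M i)}
    {i : ι} {y z : M i} (hw : w.toList = c :: (m ++ [⟨i, y⟩])) (hc : c.1 ≠ i) (hz : z ≠ 1) :
    ¬ IsOfFinOrder (((c :: m).map fun l => of l.2).prod * of z) := by
  let v : Word M :=
    { toList := c :: (m ++ [⟨i, z⟩])
      ne_one a ha := by
        rw [← List.cons_append, List.mem_append, List.mem_singleton] at ha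
        rcases ha with ha | rfl
        · exact w.ne_one a (by rw [hw, ← List.cons_append]; exact List.mem_append_left _ ha)
        · exact hz
      chain_ne := by
        have hchain := w.chain_ne
        rw [hw, ← List.isChain_map Sigma.fst] at hchain
        rw [← List.isChain_map Sigma.fst]
        simpa using hchain }
  have hv : v.prod = ((c :: m).map fun l => of l.2).prod * of z := by
    simp [v, Word.prod, mul_assoc]
  rw [← hv]
  exact Word.not_isOfFinOrder_prod (w := v) rfl hc

end Monoid

section Group

variable {G : ι → Type*} [∀ i, Group (G i)] [DecidableEq ι] [∀ i, DecidableEq (G i)]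

theorem Word.exists_shorter_isConj_of_isOfFinOrder {w : Word G} {i : ι} {x y : G i}
    {m : List (Σ i, G i)} (hw : w.toList = ⟨i, x⟩ :: (m ++ [⟨i, y⟩]))
    (hfin : IsOfFinOrder w.prod) :
    ∃ v : Word G, v.toList.length < w.toList.length ∧ IsConj v.prod w.prod := by
  have hconj : IsConj ((m.map fun l => of l.2).prod * of (y * x)) w.prod :=
    isConj_iff.2 ⟨of x, by simp [Word.prod, hw, mul_assoc]⟩
  by_cases hyx : y * x = 1
  · rw [hyx, map_one, mul_one] at hconj
    refine ⟨w.ofInfix (l := m) ⟨[⟨i, x⟩], [⟨i, y⟩], by simp [hw]⟩, ?_, hconj⟩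
    change m.length < w.toList.length
    simp [hw]
  · have hchain := w.chain_ne
    rw [hw] at hchain
    obtain ⟨c, m, rfl⟩ : ∃ c m', m = c :: m' := by
      refine List.exists_cons_of_ne_nil ?_
      rintro rfl
      simp at hchain
    have hc : c.1 ≠ i := (List.isChain_cons_cons.1 hchain).1.symm
    exact absurd (hconj.symm.isOfFinOrder hfin)
      (Word.not_isOfFinOrder_prod_mul_of (y := y) (w := w.ofInfix ⟨[⟨i, x⟩], [], by simp [hw]⟩)
        rfl hc hyx)

theorem Word.exists_isConj_of_of_isOfFinOrder [Nonempty ι] (w : Word G)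
    (hfin : IsOfFinOrder w.prod) : ∃ i, ∃ x : G i, IsConj (of x) w.prod := by
  match hw : w.toList with
  | [] => exact ⟨Classical.arbitrary ι, 1, by simp [Word.prod, hw]⟩
  | [⟨i, x⟩] =>
    have hx : w.prod = of x := by simp [Word.prod, hw]
    exact ⟨i, x, hx ▸ IsConj.refl _⟩
  | ⟨i, x⟩ :: b :: l =>
    obtain ⟨m, ⟨j, y⟩, hm⟩ := (b :: l).eq_nil_or_concat'.resolve_left (List.cons_ne_nil _ _)
    rw [hm] at hw
    obtain rfl | hij := eq_or_ne i j
    · obtain ⟨v, hlen, hv⟩ := w.exists_shorter_isConj_of_isOfFinOrder hw hfin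
      obtain ⟨k, z, hz⟩ := v.exists_isConj_of_of_isOfFinOrder (hv.symm.isOfFinOrder hfin)
      exact ⟨k, z, hz.trans hv⟩
    · exact absurd hfin (Word.not_isOfFinOrder_prod hw hij)
termination_by w.toList.length

theorem exists_isConj_of_of_isOfFinOrder [Nonempty ι] {g : CoprodI G} (hg : IsOfFinOrder g) :
    ∃ i, ∃ x : G i, IsConj (of x) g := by
  have hg' : (Word.equiv g).prod = g := Word.equiv.symm_apply_apply g
  rw [← hg'] at hg ⊢
  exact (Word.equiv g).exists_isConj_of_of_isOfFinOrder hg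

end Group

end Monoid.CoprodI

universe u v

namespace Monoid.Coprod

variable (A : Type u) (B : Type v) [Group A] [Group B]

/-- `ULift` puts both factors in one universe, so that `A ∗ B` becomes a `CoprodI` over `Bool`. -/
def factor : Bool → Type max u v
  | true => ULift.{v} A
  | false => ULift.{u} B

instance : ∀ b, Group (factor A B b)
  | true => inferInstanceAs (Group (ULift A))
  | false => inferInstanceAs (Group (ULift B))

def toCoprodI : A ∗ B →* CoprodI (factor A B) :=
  lift ((CoprodI.of (i := true)).comp MulEquiv.ulift.symm.toMonoidHom)
    ((CoprodI.of (i := false)).comp MulEquiv.ulift.symm.toMonoidHom)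

def ofCoprodI : CoprodI (factor A B) →* A ∗ B :=
  CoprodI.lift fun
    | true => inl.comp MulEquiv.ulift.toMonoidHom
    | false => inr.comp MulEquiv.ulift.toMonoidHom

theorem ofCoprodI_toCoprodI (g : A ∗ B) : ofCoprodI A B (toCoprodI A B g) = g := by
  suffices (ofCoprodI A B).comp (toCoprodI A B) = .id _ from DFunLike.congr_fun this g
  exact hom_ext (by ext; rfl) (by ext; rfl)

end Monoid.Coprod

theorem finite_order_conj_to_letter_general (A B : Type*) [Group A] [Group B]
    (g : Monoid.Coprod A B) (hg : IsOfFinOrder g) :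
    (∃ a : A, IsConj (Monoid.Coprod.inl a) g) ∨
    (∃ b : B, IsConj (Monoid.Coprod.inr b) g) := by
  classical
  obtain ⟨i, x, hx⟩ := Monoid.CoprodI.exists_isConj_of_of_isOfFinOrder
    ((Monoid.Coprod.toCoprodI A B).isOfFinOrder hg)
  have hconj := (Monoid.Coprod.ofCoprodI A B).map_isConj hx
  rw [Monoid.Coprod.ofCoprodI_toCoprodI] at hconj
  cases i
  · exact .inr ⟨x.down, hconj⟩
  · exact .inl ⟨x.down, hconj⟩

/-- In a free product `A ∗ B` of two nontrivial groups, every element of finite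
order is conjugate to a letter, i.e. to an element of `A` or of `B`. -/
theorem finite_order_conj_to_letter (A B : Type*) [Group A] [Group B]
    [Nontrivial A] [Nontrivial B]
    (g : Monoid.Coprod A B) (hg : IsOfFinOrder g) :
    (∃ a : A, IsConj (Monoid.Coprod.inl a) g) ∨
    (∃ b : B, IsConj (Monoid.Coprod.inr b) g) :=
  finite_order_conj_to_letter_general A B g hg
end

section
/- A graph product of finitely generated abelian groups over a graph with at least two vertices has nontrivial center if and only if there exists a vertex v with st(v) = V, i.e., a vertex adjacent to all other vertices. -/
/-!
If `v` is adjacent to every other vertex, `G v` commutes with every generator, so it is central.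
Conversely, for any vertex `u` the graph product is the amalgamated product of the parabolic
subgroups of `st u` and of `V ∖ {u}` over that of the link `lk u`. If `u` has a non-neighbour
`w ≠ u`, both factors properly contain the amalgamated subgroup (witnessed by `G u` and `G w`),
and a central element of such an amalgam lies in the amalgamated subgroup. Hence, if no vertex
dominates, a central `z` lies in the parabolic subgroup of `lk u` for every `u`. Retractions
onto parabolic subgroups show that `parabolic S ⊓ parabolic T = parabolic (S ∩ T)`; as `z` lies
in `parabolic F` for a finite `F` and `u ∉ lk u`, the vertices of `F` can be removed one at a
time, leaving `z ∈ parabolic ∅ = ⊥`.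
-/

universe u

/-- The set of defining relators of a graph product: commutators of letters
from vertex groups joined by an edge. -/
def graphProductRels {V : Type*} (Γ : SimpleGraph V) (G : V → Type u)
    [∀ v, Group (G v)] : Subgroup (Monoid.CoprodI G) :=
  Subgroup.normalClosure
    {x | ∃ (v w : V) (a : G v) (b : G w), Γ.Adj v w ∧
      x = Monoid.CoprodI.of a * Monoid.CoprodI.of b *
        (Monoid.CoprodI.of a)⁻¹ * (Monoid.CoprodI.of b)⁻¹}

instance {V : Type*} (Γ : SimpleGraph V) (G : V → Type u) [∀ v, Group (G v)] :
    (graphProductRels Γ G).Normal :=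
  Subgroup.normalClosure_normal

/-- The graph product of the groups `G v` over the graph `Γ`. -/
def GraphProduct {V : Type*} (Γ : SimpleGraph V) (G : V → Type u)
    [∀ v, Group (G v)] :=
  Monoid.CoprodI G ⧸ graphProductRels Γ G

instance {V : Type*} (Γ : SimpleGraph V) (G : V → Type u) [∀ v, Group (G v)] :
    Group (GraphProduct Γ G) :=
  inferInstanceAs (Group (Monoid.CoprodI G ⧸ graphProductRels Γ G))

namespace Monoid.PushoutI

open CoprodI

variable {ι : Type*} {G : ι → Type*} {H : Type*} [∀ i, Group (G i)] [Group H]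
  {φ : ∀ i, H →* G i}

variable (φ) in
def listProd (l : List (Σ i, G i)) : PushoutI φ :=
  (l.map fun p => of p.1 p.2).prod

@[simp] theorem listProd_nil : listProd φ [] = 1 := rfl

@[simp] theorem listProd_append (l₁ l₂ : List (Σ i, G i)) :
    listProd φ (l₁ ++ l₂) = listProd φ l₁ * listProd φ l₂ := by
  simp [listProd]

@[simp] theorem listProd_singleton (p : Σ i, G i) : listProd φ [p] = of p.1 p.2 := by
  simp [listProd]

def invList (l : List (Σ i, G i)) : List (Σ i, G i) :=
  (l.map fun p => ⟨p.1, p.2⁻¹⟩).reverse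

@[simp] theorem length_invList (l : List (Σ i, G i)) : (invList l).length = l.length := by
  simp [invList]

@[simp] theorem listProd_invList (l : List (Σ i, G i)) :
    listProd φ (invList l) = (listProd φ l)⁻¹ := by
  induction l with
  | nil => simp [invList]
  | cons p l ih =>
    rw [← List.singleton_append, listProd_append, mul_inv_rev, ← ih]
    simp [invList, listProd]

variable (φ) in
def IsReducedList (l : List (Σ i, G i)) : Prop :=
  l.IsChain (fun a b => a.1 ≠ b.1) ∧ ∀ p ∈ l, p.2 ∉ (φ p.1).range

theorem IsReducedList.append {l₁ l₂ : List (Σ i, G i)} (h₁ : IsReducedList φ l₁)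
    (h₂ : IsReducedList φ l₂) (h : ∀ p ∈ l₁.getLast?, ∀ q ∈ l₂.head?, p.1 ≠ q.1) :
    IsReducedList φ (l₁ ++ l₂) :=
  ⟨List.isChain_append.2 ⟨h₁.1, h₂.1, h⟩, fun p hp =>
    (List.mem_append.1 hp).elim (h₁.2 p) (h₂.2 p)⟩

theorem IsReducedList.of_append_left {l₁ l₂ : List (Σ i, G i)}
    (h : IsReducedList φ (l₁ ++ l₂)) : IsReducedList φ l₁ :=
  ⟨(List.isChain_append.1 h.1).1, fun p hp => h.2 p (List.mem_append_left _ hp)⟩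

theorem isReducedList_singleton {p : Σ i, G i} (hp : p.2 ∉ (φ p.1).range) :
    IsReducedList φ [p] :=
  ⟨List.isChain_singleton p, by simpa using hp⟩

theorem IsReducedList.invList {l : List (Σ i, G i)} (hl : IsReducedList φ l) :
    IsReducedList φ (invList l) := by
  refine ⟨?_, ?_⟩
  · rw [PushoutI.invList, List.isChain_reverse, List.isChain_map]
    exact hl.1.imp fun _ _ h => h.symm
  · simp only [PushoutI.invList, List.mem_reverse, List.mem_map]
    rintro _ ⟨p, hp, rfl⟩
    simpa using hl.2 p hp

theorem head?_invList (l : List (Σ i, G i)) :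
    (invList l).head? = l.getLast?.map fun p => ⟨p.1, p.2⁻¹⟩ := by
  rw [invList, List.head?_reverse, List.getLast?_map]

theorem ofCoprodI_word_prod (w : Word G) : ofCoprodI w.prod = listProd φ w.toList := by
  simp [Word.prod, listProd, map_list_prod, Function.comp_def]

theorem IsReducedList.eq_nil_of_mem_range_base (hφ : ∀ i, Function.Injective (φ i))
    {l : List (Σ i, G i)} (hl : IsReducedList φ l) (h : listProd φ l ∈ (base φ).range) :
    l = [] := by
  let w : Word G := ⟨l, fun p hp h1 => hl.2 p hp (h1 ▸ one_mem _), hl.1⟩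
  have hw : Reduced φ w := hl.2
  rw [← show ofCoprodI w.prod = listProd φ l from ofCoprodI_word_prod w] at h
  simpa [w, Word.empty] using congr_arg Word.toList (hw.eq_empty_of_mem_range hφ h)

theorem exists_isReducedList (hφ : ∀ i, Function.Injective (φ i)) (z : PushoutI φ) :
    ∃ (h : H) (l : List (Σ i, G i)), IsReducedList φ l ∧ base φ h * listProd φ l = z := by
  classical
  obtain ⟨d⟩ := NormalWord.transversal_nonempty φ hφ
  obtain ⟨w, rfl⟩ : ∃ w : NormalWord d, w.prod = z := ⟨_, NormalWord.equiv.left_inv z⟩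
  refine ⟨w.head, w.toList, ⟨w.chain_ne, ?_⟩, by rw [NormalWord.prod, ofCoprodI_word_prod]⟩
  rintro ⟨i, g⟩ hp (hg : g ∈ (φ i).range)
  -- a letter of a normal word lies in the transversal, which meets the base group only in `1`
  have h1 := ((d.compl i).coe_equiv_fst_eq_one_iff_mem (one_mem _)).2 (w.normalized i g hp)
  rw [(d.compl i).equiv_fst_eq_self_of_mem_of_one_mem (d.one_mem i) hg] at h1
  exact w.ne_one _ hp h1

theorem IsReducedList.eq_nil_of_mem_range_of (hφ : ∀ i, Function.Injective (φ i))
    {l : List (Σ i, G i)} (hl : IsReducedList φ l) {k : ι}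
    (hlast : ∀ p ∈ l.getLast?, p.1 ≠ k) (h : listProd φ l ∈ (of (φ := φ) k).range) :
    l = [] := by
  obtain ⟨g, hg⟩ := h
  by_cases hgb : g ∈ (φ k).range
  · obtain ⟨c, rfl⟩ := hgb
    exact hl.eq_nil_of_mem_range_base hφ ⟨c, by rw [← hg, of_apply_eq_base]⟩
  · have hred : IsReducedList φ (l ++ [⟨k, g⁻¹⟩]) :=
      hl.append (isReducedList_singleton fun h => hgb (by simpa using inv_mem h))
        (by simpa using hlast)
    have := hred.eq_nil_of_mem_range_base hφ ⟨1, by simp [← hg]⟩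
    simp at this

theorem IsReducedList.length_le_one_of_mem_range_of (hφ : ∀ i, Function.Injective (φ i))
    {l : List (Σ i, G i)} (hl : IsReducedList φ l) {k : ι}
    (h : listProd φ l ∈ (of (φ := φ) k).range) : l.length ≤ 1 := by
  obtain rfl | ⟨l, ⟨i, g⟩, rfl⟩ := l.eq_nil_or_concat'
  · simp
  by_cases hik : i = k
  · subst hik
    -- absorbing the last letter into `G i` leaves a reduced word ending in another factor
    suffices l = [] by simp [this]
    obtain ⟨a, ha⟩ := h
    refine hl.of_append_left.eq_nil_of_mem_range_of hφ (k := i) ?_ ⟨a * g⁻¹, by simp [ha]⟩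
    exact fun q hq => (List.isChain_append.1 hl.1).2.2 q hq _ rfl
  · have := hl.eq_nil_of_mem_range_of hφ (by simpa using hik) h
    simp at this

theorem center_le_range_base (hφ : ∀ i, Function.Injective (φ i)) {i j : ι} (hij : i ≠ j)
    (hi : (φ i).range ≠ ⊤) (hj : (φ j).range ≠ ⊤) :
    Subgroup.center (PushoutI φ) ≤ (base φ).range := by
  intro z hz
  obtain ⟨h, l, hl, rfl⟩ := exists_isReducedList hφ z
  obtain ⟨k, y, hy, hk⟩ : ∃ (k : ι) (y : G k), y ∉ (φ k).range ∧ ∀ p ∈ l.getLast?, p.1 ≠ k := by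
    obtain ⟨a, ha⟩ := SetLike.exists_not_mem_of_ne_top _ hi
    obtain ⟨b, hb⟩ := SetLike.exists_not_mem_of_ne_top _ hj
    by_cases hli : ∀ p ∈ l.getLast?, p.1 ≠ i
    · exact ⟨i, a, ha, hli⟩
    · push Not at hli
      obtain ⟨p, hp, rfl⟩ := hli
      refine ⟨j, b, hb, fun q hq => ?_⟩
      rwa [Option.mem_unique hq hp]
  have hconj : listProd φ l * of k y * (listProd φ l)⁻¹ = of k (φ k h⁻¹ * y * φ k h) := by
    have hcomm := Subgroup.mem_center_iff.1 hz (of k y)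
    rw [map_mul, map_mul, of_apply_eq_base, of_apply_eq_base, map_inv]
    calc listProd φ l * of k y * (listProd φ l)⁻¹
        = (base φ h)⁻¹ * (base φ h * listProd φ l * of k y) * (listProd φ l)⁻¹ := by group
      _ = (base φ h)⁻¹ * (of k y * (base φ h * listProd φ l)) * (listProd φ l)⁻¹ := by
        rw [hcomm]
      _ = (base φ h)⁻¹ * of k y * base φ h := by group
  -- conjugating `y` by `l` gives a reduced word of length `2 |l| + 1` lying in a single factor
  have hred : IsReducedList φ (l ++ [⟨k, y⟩] ++ invList l) := by
    refine (hl.append (isReducedList_singleton hy) (by simpa using hk)).append hl.invList ?_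
    simp only [List.getLast?_append, List.getLast?_singleton, Option.some_or, head?_invList,
      Option.mem_def, Option.some.injEq, Option.map_eq_some_iff]
    rintro _ rfl _ ⟨p, hp, rfl⟩
    exact (hk p hp).symm
  have hlen := hred.length_le_one_of_mem_range_of hφ ⟨_, by
    rw [listProd_append, listProd_append, listProd_invList, listProd_singleton, hconj]⟩
  obtain rfl : l = [] := List.eq_nil_of_length_eq_zero (by simp at hlen; omega)
  exact ⟨h, by simp⟩

end Monoid.PushoutI

namespace GraphProduct

open Monoid

variable {V : Type*} {Γ : SimpleGraph V} {G : V → Type u} [∀ v, Group (G v)]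

def of (v : V) : G v →* GraphProduct Γ G :=
  (QuotientGroup.mk' (graphProductRels Γ G)).comp Monoid.CoprodI.of

theorem of_commute {v w : V} (h : Γ.Adj v w) (a : G v) (b : G w) :
    Commute (of (Γ := Γ) v a) (of w b) := by
  rw [← commutatorElement_eq_one_iff_commute, commutatorElement_def]
  have hrel : Monoid.CoprodI.of a * Monoid.CoprodI.of b * (Monoid.CoprodI.of a)⁻¹ *
      (Monoid.CoprodI.of b)⁻¹ ∈ graphProductRels Γ G :=
    Subgroup.subset_normalClosure ⟨v, w, a, b, h, rfl⟩
  have h1 : QuotientGroup.mk' (graphProductRels Γ G) (Monoid.CoprodI.of a *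
      Monoid.CoprodI.of b * (Monoid.CoprodI.of a)⁻¹ * (Monoid.CoprodI.of b)⁻¹) = 1 :=
    (QuotientGroup.eq_one_iff _).2 hrel
  rw [map_mul, map_mul, map_mul, map_inv, map_inv] at h1
  exact h1

def lift {K : Type*} [Group K] (f : ∀ v, G v →* K)
    (hf : ∀ ⦃v w⦄, Γ.Adj v w → ∀ (a : G v) (b : G w), Commute (f v a) (f w b)) :
    GraphProduct Γ G →* K :=
  QuotientGroup.lift _ (Monoid.CoprodI.lift f) <| Subgroup.normalClosure_le_normal <| by
    rintro _ ⟨v, w, a, b, h, rfl⟩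
    simpa [commutatorElement_def] using (commutatorElement_eq_one_iff_commute.2 (hf h a b))

@[simp] theorem lift_of {K : Type*} [Group K] (f : ∀ v, G v →* K)
    (hf : ∀ ⦃v w⦄, Γ.Adj v w → ∀ (a : G v) (b : G w), Commute (f v a) (f w b))
    (v : V) (a : G v) : lift f hf (of v a) = f v a :=
  (QuotientGroup.lift_mk _ _ _).trans (Monoid.CoprodI.lift_of _ _)

@[elab_as_elim]
theorem induction_on {C : GraphProduct Γ G → Prop} (x : GraphProduct Γ G)
    (one : C 1) (of : ∀ v (a : G v), C (of v a)) (mul : ∀ x y, C x → C y → C (x * y)) : C x := by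
  obtain ⟨y, rfl⟩ := QuotientGroup.mk'_surjective (graphProductRels Γ G) x
  induction y using Monoid.CoprodI.induction_on with
  | one => exact one
  | of v a => exact of v a
  | mul a b ha hb => rw [map_mul]; exact mul _ _ ha hb

theorem hom_ext {K : Type*} [Group K] {f g : GraphProduct Γ G →* K}
    (h : ∀ v (a : G v), f (of v a) = g (of v a)) : f = g := by
  ext x
  induction x using induction_on with
  | one => simp
  | of v a => exact h v a
  | mul x y hx hy => rw [map_mul, map_mul, hx, hy]

theorem of_mem_center {v : V} (hv : ∀ w, w = v ∨ Γ.Adj v w) {a : G v}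
    (ha : a ∈ Subgroup.center (G v)) : of v a ∈ Subgroup.center (GraphProduct Γ G) := by
  rw [Subgroup.mem_center_iff]
  intro g
  induction g using induction_on with
  | one => simp
  | of w b =>
    rcases hv w with rfl | hadj
    · rw [← map_mul, ← map_mul, Subgroup.mem_center_iff.1 ha b]
    · exact (of_commute hadj a b).symm.eq
  | mul x y hx hy => rw [mul_assoc, hy, ← mul_assoc, hx, mul_assoc]

section proj

variable [DecidableEq V]

noncomputable def proj (v : V) : GraphProduct Γ G →* G v :=
  lift (Pi.mulSingle v (MonoidHom.id (G v))) fun w₁ w₂ h a b => by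
    by_cases hw₁ : w₁ = v
    · subst hw₁
      simp [Pi.mulSingle_eq_of_ne h.ne.symm]
    · simp [Pi.mulSingle_eq_of_ne hw₁]

@[simp] theorem proj_of_self (v : V) (a : G v) : proj (Γ := Γ) v (of v a) = a := by
  simp [proj]

theorem proj_of_ne {v w : V} (h : w ≠ v) (a : G w) : proj (Γ := Γ) v (of w a) = 1 := by
  simp [proj, Pi.mulSingle_eq_of_ne h]

end proj

theorem of_injective (v : V) : Function.Injective (of (Γ := Γ) (G := G) v) := by
  classical
  exact Function.LeftInverse.injective (proj_of_self v)

variable (Γ G) in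
def parabolic (S : Set V) : Subgroup (GraphProduct Γ G) :=
  Subgroup.closure (⋃ v ∈ S, Set.range (of v))

theorem of_mem_parabolic {S : Set V} {v : V} (hv : v ∈ S) (a : G v) :
    of v a ∈ parabolic Γ G S :=
  Subgroup.subset_closure (Set.mem_biUnion hv (Set.mem_range_self a))

theorem parabolic_le {S : Set V} {K : Subgroup (GraphProduct Γ G)}
    (h : ∀ v ∈ S, ∀ a : G v, of v a ∈ K) : parabolic Γ G S ≤ K :=
  (Subgroup.closure_le K).2 <| Set.iUnion₂_subset fun v hv => Set.range_subset_iff.2 (h v hv)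

theorem parabolic_mono {S T : Set V} (h : S ⊆ T) : parabolic Γ G S ≤ parabolic Γ G T :=
  parabolic_le fun _ hv => of_mem_parabolic (h hv)

@[simp] theorem parabolic_empty : parabolic Γ G ∅ = ⊥ := by
  simp [parabolic]

theorem exists_finset_mem_parabolic (x : GraphProduct Γ G) :
    ∃ F : Finset V, x ∈ parabolic Γ G F := by
  classical
  induction x using induction_on with
  | one => exact ⟨∅, one_mem _⟩
  | of v a => exact ⟨{v}, of_mem_parabolic (by simp) a⟩
  | mul x y hx hy =>
    obtain ⟨F₁, hF₁⟩ := hx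
    obtain ⟨F₂, hF₂⟩ := hy
    refine ⟨F₁ ∪ F₂, mul_mem ?_ ?_⟩
    · exact parabolic_mono (by simp) hF₁
    · exact parabolic_mono (by simp) hF₂

theorem parabolic_le_ker_proj [DecidableEq V] {S : Set V} {v : V} (hv : v ∉ S) :
    parabolic Γ G S ≤ (proj v).ker :=
  parabolic_le fun _ hw a => proj_of_ne (ne_of_mem_of_not_mem hw hv) a

open scoped Classical in
noncomputable def retraction (S : Set V) : GraphProduct Γ G →* GraphProduct Γ G :=
  lift (fun v => if v ∈ S then of v else 1) fun v w h a b => by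
    by_cases hv : v ∈ S <;> by_cases hw : w ∈ S <;> simp [hv, hw, of_commute h]

theorem retraction_of_mem {S : Set V} {v : V} (hv : v ∈ S) (a : G v) :
    retraction (Γ := Γ) S (of v a) = of v a := by
  simp [retraction, hv]

theorem retraction_of_notMem {S : Set V} {v : V} (hv : v ∉ S) (a : G v) :
    retraction (Γ := Γ) S (of v a) = 1 := by
  simp [retraction, hv]

theorem retraction_eq_self {S : Set V} {x : GraphProduct Γ G} (hx : x ∈ parabolic Γ G S) :
    retraction S x = x :=
  parabolic_le (K := (retraction S).eqLocus (MonoidHom.id _))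
    (fun _ hv a => retraction_of_mem hv a) hx

theorem retraction_mem_parabolic_inter {S T : Set V} {x : GraphProduct Γ G}
    (hx : x ∈ parabolic Γ G T) : retraction S x ∈ parabolic Γ G (S ∩ T) := by
  refine parabolic_le (K := (parabolic Γ G (S ∩ T)).comap (retraction S)) (fun v hv a => ?_) hx
  by_cases hvS : v ∈ S
  · rw [Subgroup.mem_comap, retraction_of_mem hvS]
    exact of_mem_parabolic (Set.mem_inter hvS hv) a
  · rw [Subgroup.mem_comap, retraction_of_notMem hvS]
    exact one_mem _

theorem parabolic_inf (S T : Set V) :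
    parabolic Γ G S ⊓ parabolic Γ G T = parabolic Γ G (S ∩ T) := by
  refine le_antisymm (fun x ⟨hS, hT⟩ => ?_)
    (le_inf (parabolic_mono Set.inter_subset_left) (parabolic_mono Set.inter_subset_right))
  rw [← retraction_eq_self hS]
  exact retraction_mem_parabolic_inter hT

def ofParabolic {S : Set V} {v : V} (hv : v ∈ S) : G v →* parabolic Γ G S :=
  (of v).codRestrict _ (of_mem_parabolic hv)

@[simp] theorem coe_ofParabolic {S : Set V} {v : V} (hv : v ∈ S) (a : G v) :
    (ofParabolic (Γ := Γ) hv a : GraphProduct Γ G) = of v a :=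
  rfl

theorem parabolic_hom_ext {S : Set V} {K : Type*} [Group K] {f g : parabolic Γ G S →* K}
    (h : ∀ v (hv : v ∈ S) (a : G v), f (ofParabolic hv a) = g (ofParabolic hv a)) : f = g := by
  ext ⟨x, hx⟩
  induction hx using Subgroup.closure_induction with
  | mem x hx =>
    obtain ⟨v, hv, a, rfl⟩ : ∃ v ∈ S, ∃ a, of v a = x := by simpa using hx
    exact h v hv a
  | one => exact (map_one f).trans (map_one g).symm
  | mul x y hx hy ihx ihy =>
    exact (map_mul f ⟨x, hx⟩ ⟨y, hy⟩).trans <| (congr_arg₂ _ ihx ihy).trans (map_mul g _ _).symm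
  | inv x hx ih =>
    exact (map_inv f ⟨x, hx⟩).trans <| (congr_arg _ ih).trans (map_inv g _).symm

variable (Γ) in
def splitSet (u : V) : Bool → Set V
  | true => insert u (Γ.neighborSet u)
  | false => {u}ᶜ

variable (Γ) in
theorem neighborSet_subset_splitSet (u : V) : ∀ b, Γ.neighborSet u ⊆ splitSet Γ u b
  | true => Set.subset_insert _ _
  | false => fun _ hx => (Γ.ne_of_adj hx).symm

variable (Γ) in
theorem mem_splitSet_decide [DecidableEq V] (u v : V) : v ∈ splitSet Γ u (decide (v = u)) := by
  by_cases h : v = u <;> simp [splitSet, h]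

theorem exists_splitSet_of_adj (u : V) {v w : V} (h : Γ.Adj v w) :
    ∃ b, v ∈ splitSet Γ u b ∧ w ∈ splitSet Γ u b := by
  by_cases hv : v = u
  · exact ⟨true, by simp [splitSet, hv], by simp [splitSet, ← hv, h]⟩
  by_cases hw : w = u
  · subst hw
    exact ⟨true, by simp [splitSet, h.symm], by simp [splitSet]⟩
  exact ⟨false, hv, hw⟩

variable (Γ G) in
def splitInclusion (u : V) (b : Bool) :
    parabolic Γ G (Γ.neighborSet u) →* parabolic Γ G (splitSet Γ u b) :=
  Subgroup.inclusion (parabolic_mono (neighborSet_subset_splitSet Γ u b))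

theorem of_ofParabolic_eq_base {u v : V} (hv : v ∈ Γ.neighborSet u) {b : Bool}
    (hb : v ∈ splitSet Γ u b) (a : G v) :
    PushoutI.of (φ := splitInclusion Γ G u) b (ofParabolic hb a) =
      PushoutI.base _ (ofParabolic hv a) := by
  rw [show ofParabolic hb a = splitInclusion Γ G u b (ofParabolic hv a) from Subtype.ext rfl]
  exact PushoutI.of_apply_eq_base _ b _

theorem of_ofParabolic_eq {u v : V} {b c : Bool} (hb : v ∈ splitSet Γ u b)
    (hc : v ∈ splitSet Γ u c) (a : G v) :
    PushoutI.of (φ := splitInclusion Γ G u) b (ofParabolic hb a) =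
      PushoutI.of c (ofParabolic hc a) := by
  by_cases hbc : b = c
  · subst hbc
    rfl
  have hv : v ∈ Γ.neighborSet u := by
    cases b <;> cases c <;> simp_all [splitSet]
  rw [of_ofParabolic_eq_base hv, of_ofParabolic_eq_base hv]

def fromAmalgam (u : V) : PushoutI (splitInclusion Γ G u) →* GraphProduct Γ G :=
  PushoutI.lift (fun b => (parabolic Γ G (splitSet Γ u b)).subtype)
    (parabolic Γ G (Γ.neighborSet u)).subtype fun _ => Subgroup.subtype_comp_inclusion _

theorem fromAmalgam_of (u : V) (b : Bool) (x : parabolic Γ G (splitSet Γ u b)) :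
    fromAmalgam u (PushoutI.of b x) = x :=
  PushoutI.lift_of _ _ _ _

theorem fromAmalgam_base (u : V) (x : parabolic Γ G (Γ.neighborSet u)) :
    fromAmalgam u (PushoutI.base _ x) = x :=
  PushoutI.lift_base _ _ _ _

section amalgam

variable [DecidableEq V]

noncomputable def toAmalgam (u : V) : GraphProduct Γ G →* PushoutI (splitInclusion Γ G u) :=
  lift (fun v => (PushoutI.of (decide (v = u))).comp (ofParabolic (mem_splitSet_decide Γ u v)))
    fun v w h a b => by
      obtain ⟨c, hv, hw⟩ := exists_splitSet_of_adj u h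
      simp only [MonoidHom.comp_apply]
      rw [of_ofParabolic_eq _ hv, of_ofParabolic_eq _ hw]
      exact (show Commute (ofParabolic hv a) (ofParabolic hw b) from
        Subtype.ext (of_commute h a b).eq).map _

theorem toAmalgam_of {u v : V} {b : Bool} (hv : v ∈ splitSet Γ u b) (a : G v) :
    toAmalgam u (of v a) = PushoutI.of b (ofParabolic hv a) := by
  rw [toAmalgam, lift_of, MonoidHom.comp_apply, of_ofParabolic_eq]

noncomputable def amalgamEquiv (u : V) : GraphProduct Γ G ≃* PushoutI (splitInclusion Γ G u) :=
  MonoidHom.toMulEquiv (toAmalgam u) (fromAmalgam u)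
    (hom_ext fun v a => by
      rw [MonoidHom.comp_apply, toAmalgam_of (mem_splitSet_decide Γ u v), fromAmalgam_of]; rfl)
    (PushoutI.hom_ext_nonempty fun b => parabolic_hom_ext fun v hv a => by
      rw [MonoidHom.comp_apply, MonoidHom.comp_apply, fromAmalgam_of, coe_ofParabolic,
        toAmalgam_of hv]; rfl)

end amalgam

theorem range_splitInclusion_ne_top {u v : V} [Nontrivial (G v)] {b : Bool}
    (hv : v ∈ splitSet Γ u b) (hvu : v ∉ Γ.neighborSet u) :
    (splitInclusion Γ G u b).range ≠ ⊤ := by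
  classical
  obtain ⟨a, ha⟩ := exists_ne (1 : G v)
  intro htop
  obtain ⟨c, hc⟩ : ofParabolic hv a ∈ (splitInclusion Γ G u b).range := htop ▸ Subgroup.mem_top _
  have hmem : of v a ∈ parabolic Γ G (Γ.neighborSet u) := by
    rw [← coe_ofParabolic hv, ← hc]
    exact c.2
  exact ha (by simpa using parabolic_le_ker_proj hvu hmem)

theorem mem_parabolic_neighborSet_of_mem_center [∀ v, Nontrivial (G v)] {u w : V} (hwu : w ≠ u)
    (hnadj : ¬Γ.Adj u w) {z : GraphProduct Γ G} (hz : z ∈ Subgroup.center (GraphProduct Γ G)) :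
    z ∈ parabolic Γ G (Γ.neighborSet u) := by
  classical
  obtain ⟨c, hc⟩ := PushoutI.center_le_range_base (fun b => Subgroup.inclusion_injective _)
    (i := true) (j := false) (by decide)
    (range_splitInclusion_ne_top (v := u) (by simp [splitSet]) (by simp))
    (range_splitInclusion_ne_top (v := w) hwu hnadj)
    (MulEquivClass.apply_mem_center (amalgamEquiv u) hz)
  have hzc : z = c := by
    rw [← (amalgamEquiv u).symm_apply_apply z, ← hc]
    exact fromAmalgam_base u c
  exact hzc ▸ c.2

theorem center_eq_bot [∀ v, Nontrivial (G v)] (h : ∀ u, ∃ w, w ≠ u ∧ ¬Γ.Adj u w) :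
    Subgroup.center (GraphProduct Γ G) = ⊥ := by
  classical
  refine eq_bot_iff.2 fun z hz => ?_
  obtain ⟨F, hF⟩ := exists_finset_mem_parabolic z
  induction F using Finset.induction_on with
  | empty => simpa using hF
  | insert u F _ ih =>
    obtain ⟨w, hwu, hnadj⟩ := h u
    have hz' : z ∈ parabolic Γ G (↑(insert u F) ∩ Γ.neighborSet u) := by
      rw [← parabolic_inf]
      exact ⟨hF, mem_parabolic_neighborSet_of_mem_center hwu hnadj hz⟩
    refine ih (parabolic_mono ?_ hz')
    rintro x ⟨hx, hux⟩
    simpa [(Γ.ne_of_adj hux).symm] using hx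

end GraphProduct

theorem graph_product_nontrivial_center_iff_general {V : Type*}
    (Γ : SimpleGraph V) (G : V → Type u) [∀ v, CommGroup (G v)]
    [∀ v, Nontrivial (G v)] :
    Nontrivial (Subgroup.center (GraphProduct Γ G)) ↔
      ∃ v : V, ∀ w : V, w = v ∨ Γ.Adj v w := by
  rw [Subgroup.nontrivial_iff_ne_bot]
  constructor
  · intro hne
    by_contra! h
    exact hne (GraphProduct.center_eq_bot h)
  · rintro ⟨v, hv⟩ hbot
    obtain ⟨a, ha⟩ := exists_ne (1 : G v)
    have hcen := GraphProduct.of_mem_center (Γ := Γ) hv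
      (Subgroup.mem_center_iff.2 fun b => mul_comm b a)
    rw [hbot, Subgroup.mem_bot] at hcen
    exact ha (GraphProduct.of_injective v (hcen.trans (map_one _).symm))

/-- A graph product of nontrivial finitely generated abelian groups on a graph
with at least two vertices has nontrivial center iff some vertex is adjacent to
all other vertices (i.e. `st v = V`). -/
theorem graph_product_nontrivial_center_iff {V : Type*} [Fintype V]
    (Γ : SimpleGraph V) (G : V → Type u) [∀ v, CommGroup (G v)]
    [∀ v, Group.FG (G v)] [∀ v, Nontrivial (G v)]
    (hV : 2 ≤ Fintype.card V) :
    Nontrivial (Subgroup.center (GraphProduct Γ G)) ↔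
      ∃ v : V, ∀ w : V, w = v ∨ Γ.Adj v w :=
  graph_product_nontrivial_center_iff_general Γ G
end

section
/- Let Γ = (V,E) be a graph in which no vertex v satisfies st(v) = V, and suppose the graph product W_Γ of primary or infinite cyclic vertex groups decomposes as a direct product of truncated subgroups W_{Γ_{V₁}} × W_{Γ_{V₂}} with V = V₁ ⊔ V₂. Then both V₁ and V₂ are lower cones with respect to the transvection preorder ≤_τ. -/
universe u

/-- The star of a vertex: the vertex together with its neighbours. -/
def vertexStar {V : Type*} (Γ : SimpleGraph V) (v : V) : Set V :=
  insert v (Γ.neighborSet v)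

/-- A group is `p`-primary cyclic if it is isomorphic to `ℤ/p^k` for some `k ≥ 1`. -/
def IsPrimaryCyclic (G : Type*) [Group G] (p : ℕ) : Prop :=
  ∃ k : ℕ, 1 ≤ k ∧ Nonempty (G ≃* Multiplicative (ZMod (p ^ k)))

/-- The transvection preorder `v ≤_τ w` on vertices of a graph product with
primary or infinite cyclic vertex groups: the reflexive closure of "the
dominated transvection `τ_{v,w}` is defined", i.e. for `G v` infinite cyclic
one needs `lk(v) ⊆ st(w)`, and for `G v`, `G w` primary for the same prime one
needs `st(v) ⊆ st(w)`. -/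
def leTau {V : Type*} (Γ : SimpleGraph V) (G : V → Type u) [∀ v, Group (G v)]
    (v w : V) : Prop :=
  v = w ∨ (v ≠ w ∧
    ((Nonempty (G v ≃* Multiplicative ℤ) ∧
        Γ.neighborSet v ⊆ vertexStar Γ w) ∨
     (∃ p : ℕ, p.Prime ∧ IsPrimaryCyclic (G v) p ∧ IsPrimaryCyclic (G w) p ∧
        vertexStar Γ v ⊆ vertexStar Γ w)))

/-- The equivalence relation induced by the preorder `≤_τ`. -/
def simTau {V : Type*} (Γ : SimpleGraph V) (G : V → Type u) [∀ v, Group (G v)]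
    (v w : V) : Prop :=
  leTau Γ G v w ∧ leTau Γ G w v

/-- A lower cone for a relation `r`. -/
def IsLowerCone {Y : Type*} (r : Y → Y → Prop) (X : Set Y) : Prop :=
  ∀ t ∈ X, ∀ s : Y, r s t → s ∈ X

theorem leTau.neighborSet_subset_vertexStar {V : Type*} {Γ : SimpleGraph V}
    {G : V → Type u} [∀ v, Group (G v)] {v w : V} (h : leTau Γ G v w) (hne : v ≠ w) :
    Γ.neighborSet v ⊆ vertexStar Γ w := by
  rcases h with rfl | ⟨-, ⟨-, hlk⟩ | ⟨p, -, -, -, hst⟩⟩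
  · exact absurd rfl hne
  · exact hlk
  · exact (Set.subset_insert v _).trans hst

theorem vertexStar_eq_univ_of_join {V : Type*} {Γ : SimpleGraph V} {A B : Set V}
    (hunion : A ∪ B = Set.univ) (hjoin : ∀ v ∈ A, ∀ w ∈ B, Γ.Adj v w)
    {s t : V} (ht : t ∈ A) (hs : s ∈ B) (hsub : Γ.neighborSet s ⊆ vertexStar Γ t) :
    vertexStar Γ t = Set.univ := by
  refine Set.eq_univ_of_forall fun x => ?_
  rcases hunion.symm ▸ Set.mem_univ x with hx | hx
  · exact hsub (hjoin x hx s hs).symm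
  · obtain rfl | hxt := eq_or_ne x t
    · exact Set.mem_insert x _
    · exact Set.mem_insert_of_mem _ (hjoin t ht x hx)

/-- In a join `A * B`, a vertex `s ∈ B` below some `t ∈ A` would have `lk(s) ⊆ st(t)`; as `lk(s)`
contains `A` and `st(t)` contains `B`, this forces `st(t) = V`. -/
theorem isLowerCone_leTau_of_join {V : Type*} (Γ : SimpleGraph V) (G : V → Type u)
    [∀ v, Group (G v)] {A B : Set V} (hstar : ∀ t ∈ A, vertexStar Γ t ≠ Set.univ)
    (hunion : A ∪ B = Set.univ) (hjoin : ∀ v ∈ A, ∀ w ∈ B, Γ.Adj v w) :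
    IsLowerCone (leTau Γ G) A := by
  intro t ht s hst
  by_contra hsA
  have hsB : s ∈ B := (hunion.symm ▸ Set.mem_univ s).resolve_left hsA
  have hne : s ≠ t := fun h => hsA (h ▸ ht)
  exact hstar t ht (vertexStar_eq_univ_of_join hunion hjoin ht hsB
    (hst.neighborSet_subset_vertexStar hne))

theorem direct_truncated_factors_are_lower_cones_general {V : Type*}
    (Γ : SimpleGraph V) (G : V → Type u) [∀ v, Group (G v)]
    (hstar : ∀ v : V, vertexStar Γ v ≠ Set.univ)
    (V₁ V₂ : Set V) (hunion : V₁ ∪ V₂ = Set.univ)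
    (hjoin : ∀ v ∈ V₁, ∀ w ∈ V₂, Γ.Adj v w) :
    IsLowerCone (leTau Γ G) V₁ ∧ IsLowerCone (leTau Γ G) V₂ :=
  ⟨isLowerCone_leTau_of_join Γ G (fun v _ => hstar v) hunion hjoin,
    isLowerCone_leTau_of_join Γ G (fun v _ => hstar v) (Set.union_comm V₁ V₂ ▸ hunion)
      fun v hv w hw => (hjoin w hw v hv).symm⟩

/-- If no vertex of `Γ` satisfies `st(v) = V` and the graph product `W_Γ` (with
primary or infinite cyclic vertex groups) decomposes as a direct product of the
truncated subgroups on `V₁` and `V₂` (equivalently: `V = V₁ ⊔ V₂` and every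
vertex of `V₁` is adjacent to every vertex of `V₂`), then both `V₁` and `V₂`
are lower cones with respect to `≤_τ`. -/
theorem direct_truncated_factors_are_lower_cones {V : Type*}
    (Γ : SimpleGraph V) (G : V → Type u) [∀ v, Group (G v)]
    (hvert : ∀ v : V, Nonempty (G v ≃* Multiplicative ℤ) ∨
      ∃ p : ℕ, p.Prime ∧ IsPrimaryCyclic (G v) p)
    (hstar : ∀ v : V, vertexStar Γ v ≠ Set.univ)
    (V₁ V₂ : Set V) (hne₁ : V₁.Nonempty) (hne₂ : V₂.Nonempty)
    (hdisj : Disjoint V₁ V₂) (hunion : V₁ ∪ V₂ = Set.univ)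
    (hjoin : ∀ v ∈ V₁, ∀ w ∈ V₂, Γ.Adj v w) :
    IsLowerCone (leTau Γ G) V₁ ∧ IsLowerCone (leTau Γ G) V₂ :=
  direct_truncated_factors_are_lower_cones_general Γ G hstar V₁ V₂ hunion hjoin
end

section
/- If M ⊆ V is a minimal equivalence class of the relation ∼_τ, then M ∪ L_M is a lower cone with respect to ≤_τ, where L_M = {v ∈ V : st(v) ⊆ V − M}. Moreover, if all vertex groups are finite, then L_M itself is a lower cone for any subset M ⊆ V. -/
universe u

/-- `L_M`: the set of vertices `v` with `st(v) ⊆ V − M`, i.e. vertices that do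
not commute with (and are distinct from) every vertex of `M`. -/
def lowerL {V : Type*} (Γ : SimpleGraph V) (M : Set V) : Set V :=
  {v | vertexStar Γ v ⊆ Mᶜ}

section

variable {V : Type*} {Γ : SimpleGraph V} {G : V → Type u} [∀ v, Group (G v)]

lemma neighborSet_subset_vertexStar_of_leTau {s t : V} (h : leTau Γ G s t) :
    Γ.neighborSet s ⊆ vertexStar Γ t := by
  rcases h with rfl | ⟨-, ⟨-, hsub⟩ | ⟨p, -, -, -, hsub⟩⟩
  · exact Set.subset_insert _ _
  · exact hsub
  · exact (Set.subset_insert _ _).trans hsub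

lemma vertexStar_subset_of_leTau {s t : V} [Finite (G s)] (h : leTau Γ G s t) :
    vertexStar Γ s ⊆ vertexStar Γ t := by
  rcases h with rfl | ⟨-, ⟨⟨e⟩, -⟩ | ⟨p, -, -, -, hsub⟩⟩
  · exact subset_rfl
  · have : Finite (Multiplicative ℤ) := Finite.of_equiv _ e.toEquiv
    exact (not_finite (Multiplicative ℤ)).elim
  · exact hsub

lemma mem_lowerL_of_leTau {M : Set V} {s t : V} (ht : t ∈ lowerL Γ M) (hst : leTau Γ G s t)
    (hs : s ∉ M) : s ∈ lowerL Γ M :=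
  Set.insert_subset hs ((neighborSet_subset_vertexStar_of_leTau hst).trans ht)

lemma isLowerCone_union_lowerL {M : Set V} (hM : IsLowerCone (leTau Γ G) M) :
    IsLowerCone (leTau Γ G) (M ∪ lowerL Γ M) := by
  rintro t (ht | ht) s hst
  · exact Or.inl (hM t ht s hst)
  · by_cases hs : s ∈ M
    · exact Or.inl hs
    · exact Or.inr (mem_lowerL_of_leTau ht hst hs)

lemma isLowerCone_lowerL [∀ v, Finite (G v)] (M : Set V) :
    IsLowerCone (leTau Γ G) (lowerL Γ M) :=
  fun _ ht _ hst => (vertexStar_subset_of_leTau hst).trans ht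

end

theorem class_union_lowerL_is_lower_cone_general {V : Type*}
    (Γ : SimpleGraph V) (G : V → Type u) [∀ v, Group (G v)] :
    (∀ M : Set V, (∃ v₀ : V, M = {w | simTau Γ G w v₀}) →
      (∀ w v : V, v ∈ M → leTau Γ G w v → w ∈ M) →
      IsLowerCone (leTau Γ G) (M ∪ lowerL Γ M)) ∧
    ((∀ v : V, Finite (G v)) →
      ∀ M : Set V, IsLowerCone (leTau Γ G) (lowerL Γ M)) :=
  ⟨fun _ _ hmin => isLowerCone_union_lowerL fun t ht s hst => hmin s t ht hst,
    fun _ => isLowerCone_lowerL⟩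

/-- For a minimal equivalence class `M` of `∼_τ` (minimality being expressed by
saying that anything `≤_τ`-below an element of `M` lies in `M`), the set
`M ∪ L_M` is a lower cone for `≤_τ`; moreover if all vertex groups are finite
then `L_M` is itself a lower cone for every subset `M ⊆ V`. -/
theorem class_union_lowerL_is_lower_cone {V : Type*}
    (Γ : SimpleGraph V) (G : V → Type u) [∀ v, Group (G v)]
    (hvert : ∀ v : V, Nonempty (G v ≃* Multiplicative ℤ) ∨
      ∃ p : ℕ, p.Prime ∧ IsPrimaryCyclic (G v) p) :
    (∀ M : Set V, (∃ v₀ : V, M = {w | simTau Γ G w v₀}) →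
      (∀ w v : V, v ∈ M → leTau Γ G w v → w ∈ M) →
      IsLowerCone (leTau Γ G) (M ∪ lowerL Γ M)) ∧
    ((∀ v : V, Finite (G v)) →
      ∀ M : Set V, IsLowerCone (leTau Γ G) (lowerL Γ M)) :=
  class_union_lowerL_is_lower_cone_general Γ G
end
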